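/- Let D₁, D₂, …, D_N be positive semidefinite operators on a finite-dimensional complex inner product space, and let s₁, …, s_N be N mutually orthogonal permutations of {1,…,N}, i.e. permutations such that for every k ≠ k' and every i one has s_k(i) ≠ s_{k'}(i). Then ‖Σ_{i=1}^N D_i‖ ≤ Σ_{k=1}^N max_{i ∈ {1,…,N}} ‖√(D_i) · √(D_{s_k(i)})‖, where √X denotes the positive semidefinite square root of X and ‖·‖ denotes the operator norm (Schatten ∞-norm, i.e. the largest singular value). -/

import Mathlib

/-! With `f i = √(D i)` and `T = ∑ i, f i ^ 2`, mutual orthogonality makes `k ↦ σ k i` a bijection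
for every `i`, so `T ^ 2 = ∑ k, G k` with `G k = ∑ i, f i ^ 2 * f (σ k i) ^ 2`. Writing
`G k = ∑ i, (f i)⋆ * (f i * f (σ k i)) * f (σ k i)` and applying Cauchy–Schwarz to `⟪G k x, y⟫`
gives `‖G k‖ ≤ (max_i ‖f i * f (σ k i)‖) * ‖T‖`, because both `∑ i, f i ^ 2` and
`∑ i, f (σ k i) ^ 2` equal `T`. The C⋆-identity `‖T‖ ^ 2 = ‖T ^ 2‖` then yields
`‖T‖ ^ 2 ≤ (∑ k, max_i ‖f i * f (σ k i)‖) * ‖T‖`. -/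

open Matrix ComplexOrder

/-- The positive semidefinite square root, as defined in Mathlib of December 2024
(`Matrix.PosSemidef.sqrt`, since removed from Mathlib). -/
noncomputable def Matrix.PosSemidef.sqrt {n 𝕜 : Type*} [Fintype n] [DecidableEq n] [RCLike 𝕜]
    {A : Matrix n n 𝕜} (hA : A.PosSemidef) : Matrix n n 𝕜 :=
  hA.1.eigenvectorUnitary.1 * diagonal ((↑) ∘ Real.sqrt ∘ hA.1.eigenvalues) *
  (star hA.1.eigenvectorUnitary : Matrix n n 𝕜)

/-- The operator norm (Schatten ∞-norm, largest singular value) of a complex square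
matrix, viewed as an operator on the Euclidean space `ℂ^d`. -/
noncomputable def opNorm {d : ℕ} (A : Matrix (Fin d) (Fin d) ℂ) : ℝ :=
  ‖Matrix.toEuclideanCLM (𝕜 := ℂ) A‖

open scoped InnerProductSpace

namespace Matrix.PosSemidef

variable {n 𝕜 : Type*} [Fintype n] [DecidableEq n] [RCLike 𝕜] {A : Matrix n n 𝕜}

lemma sqrt_eq_cfc (hA : A.PosSemidef) : hA.sqrt = cfc Real.sqrt A := by
  rw [hA.1.cfc_eq]
  rfl

lemma isSelfAdjoint_sqrt (hA : A.PosSemidef) : IsSelfAdjoint hA.sqrt :=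
  hA.sqrt_eq_cfc ▸ cfc_predicate _ _

lemma sqrt_mul_sqrt (hA : A.PosSemidef) : hA.sqrt * hA.sqrt = A := by
  rw [hA.sqrt_eq_cfc, ← cfc_mul Real.sqrt Real.sqrt A]
  conv_rhs => rw [← cfc_id ℝ A hA.isHermitian]
  refine cfc_congr fun x hx => Real.mul_self_sqrt ?_
  obtain ⟨i, rfl⟩ := hA.1.spectrum_real_eq_range_eigenvalues ▸ hx
  exact hA.eigenvalues_nonneg i

end Matrix.PosSemidef

lemma Fintype.sum_mul_sum_eq_sum_sum_of_bijective {ι κ R : Type*} [Fintype ι] [Fintype κ]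
    [NonUnitalNonAssocSemiring R] (σ : κ → ι → ι) (hσ : ∀ i, (fun k => σ k i).Bijective)
    (x y : ι → R) : (∑ i, x i) * (∑ j, y j) = ∑ k, ∑ i, x i * y (σ k i) := by
  rw [Finset.sum_mul_sum, Finset.sum_comm (f := fun k i => x i * y (σ k i))]
  exact Finset.sum_congr rfl fun i _ => (Fintype.sum_bijective _ (hσ i) _ _ fun k => rfl).symm

namespace ContinuousLinearMap

variable {𝕜 E ι : Type*} [RCLike 𝕜] [NormedAddCommGroup E] [InnerProductSpace 𝕜 E]
  [CompleteSpace E] [Fintype ι]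

lemma sum_norm_sq_apply_le (a : ι → E →L[𝕜] E) (x : E) :
    ∑ i, ‖a i x‖ ^ 2 ≤ ‖∑ i, star (a i) * a i‖ * ‖x‖ ^ 2 := by
  have hsum : ∑ i, ‖a i x‖ ^ 2 = RCLike.re ⟪(∑ i, star (a i) * a i) x, x⟫_𝕜 := by
    simp only [_root_.sum_apply, sum_inner, map_sum, mul_apply_eq_comp, star_eq_adjoint,
      adjoint_inner_left, inner_self_eq_norm_sq]
  calc ∑ i, ‖a i x‖ ^ 2 = RCLike.re ⟪(∑ i, star (a i) * a i) x, x⟫_𝕜 := hsum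
    _ ≤ ‖(∑ i, star (a i) * a i) x‖ * ‖x‖ := re_inner_le_norm _ _
    _ ≤ ‖∑ i, star (a i) * a i‖ * ‖x‖ * ‖x‖ := by gcongr; exact le_opNorm _ _
    _ = ‖∑ i, star (a i) * a i‖ * ‖x‖ ^ 2 := by ring

lemma norm_sum_star_mul_mul_le (a b c : ι → E →L[𝕜] E) {M : ℝ} (hM : 0 ≤ M)
    (hc : ∀ i, ‖c i‖ ≤ M) :
    ‖∑ i, star (a i) * c i * b i‖ ≤
      M * (√‖∑ i, star (a i) * a i‖ * √‖∑ i, star (b i) * b i‖) := by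
  refine opNorm_le_of_re_inner_le (by positivity) fun x y hx hy => ?_
  have hterm : ∀ i, ‖⟪(star (a i) * c i * b i) x, y⟫_𝕜‖ ≤ M * (‖a i y‖ * ‖b i x‖) := by
    intro i
    rw [mul_apply_eq_comp, mul_apply_eq_comp, star_eq_adjoint, adjoint_inner_left]
    calc _ ≤ ‖c i (b i x)‖ * ‖a i y‖ := norm_inner_le_norm _ _
      _ ≤ M * ‖b i x‖ * ‖a i y‖ := by gcongr; exact (c i).le_of_opNorm_le (hc i) _
      _ = M * (‖a i y‖ * ‖b i x‖) := by ring
  have hsqrt : ∀ (f : ι → E →L[𝕜] E) (z : E), ‖z‖ = 1 →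
      √(∑ i, ‖f i z‖ ^ 2) ≤ √‖∑ i, star (f i) * f i‖ := fun f z hz =>
    Real.sqrt_le_sqrt (by simpa only [hz, one_pow, mul_one] using sum_norm_sq_apply_le f z)
  calc RCLike.re ⟪(∑ i, star (a i) * c i * b i) x, y⟫_𝕜
      ≤ ‖⟪(∑ i, star (a i) * c i * b i) x, y⟫_𝕜‖ := RCLike.re_le_norm _
    _ ≤ ∑ i, ‖⟪(star (a i) * c i * b i) x, y⟫_𝕜‖ := by
        rw [_root_.sum_apply, sum_inner]; exact norm_sum_le _ _
    _ ≤ ∑ i, M * (‖a i y‖ * ‖b i x‖) := Finset.sum_le_sum fun i _ => hterm i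
    _ = M * ∑ i, ‖a i y‖ * ‖b i x‖ := (Finset.mul_sum ..).symm
    _ ≤ M * (√(∑ i, ‖a i y‖ ^ 2) * √(∑ i, ‖b i x‖ ^ 2)) := by
        gcongr; exact Real.sum_mul_le_sqrt_mul_sqrt _ _ _
    _ ≤ M * (√‖∑ i, star (a i) * a i‖ * √‖∑ i, star (b i) * b i‖) := by
        gcongr M * (?_ * ?_)
        exacts [hsqrt a y hy, hsqrt b x hx]

lemma norm_sum_mul_self_le_sum_iSup {κ : Type*} [Fintype κ] (f : ι → E →L[𝕜] E)
    (hf : ∀ i, IsSelfAdjoint (f i)) (σ : κ → Equiv.Perm ι) (hσ : ∀ i, (fun k => σ k i).Bijective) :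
    ‖∑ i, f i * f i‖ ≤ ∑ k, ⨆ i, ‖f i * f (σ k i)‖ := by
  set T := ∑ i, f i * f i with hT_def
  set M : κ → ℝ := fun k => ⨆ i, ‖f i * f (σ k i)‖
  have hM : ∀ k, 0 ≤ M k := fun k => Real.iSup_nonneg fun i => norm_nonneg _
  have hT : IsSelfAdjoint T := isSelfAdjoint_sum _ fun i _ => by
    simpa only [(hf i).star_eq] using IsSelfAdjoint.star_mul_self (f i)
  have hblock : ∀ k, ‖∑ i, f i * (f i * f (σ k i)) * f (σ k i)‖ ≤ M k * ‖T‖ := by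
    intro k
    have hperm : ∑ i, f (σ k i) * f (σ k i) = T := Equiv.sum_comp (σ k) fun j => f j * f j
    have := norm_sum_star_mul_mul_le f (fun i => f (σ k i)) (fun i => f i * f (σ k i)) (hM k)
      fun i => le_ciSup (f := fun i => ‖f i * f (σ k i)‖) (Finite.bddAbove_range _) i
    simpa only [(hf _).star_eq, hperm, ← hT_def, Real.mul_self_sqrt (norm_nonneg T)] using this
  have hTT : T * T = ∑ k, ∑ i, f i * (f i * f (σ k i)) * f (σ k i) := by
    rw [hT_def, Fintype.sum_mul_sum_eq_sum_sum_of_bijective (fun k => σ k) hσ]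
    simp only [mul_assoc]
  have hnorm_sq : ‖T‖ * ‖T‖ ≤ (∑ k, M k) * ‖T‖ := calc
    ‖T‖ * ‖T‖ = ‖T * T‖ := by rw [hT.norm_mul_self, sq]
    _ ≤ ∑ k, ‖∑ i, f i * (f i * f (σ k i)) * f (σ k i)‖ := hTT ▸ norm_sum_le _ _
    _ ≤ ∑ k, M k * ‖T‖ := Finset.sum_le_sum fun k _ => hblock k
    _ = (∑ k, M k) * ‖T‖ := (Finset.sum_mul ..).symm
  rcases (norm_nonneg T).eq_or_lt with hT0 | hT0
  · exact hT0 ▸ Finset.sum_nonneg fun k _ => hM k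
  · exact le_of_mul_le_mul_right hnorm_sq hT0

end ContinuousLinearMap

theorem stmt3_general {d N : ℕ}
    (D : Fin N → Matrix (Fin d) (Fin d) ℂ)
    (hD : ∀ i, (D i).PosSemidef)
    (σ : Fin N → Equiv.Perm (Fin N))
    (horth : ∀ k k', k ≠ k' → ∀ i, σ k i ≠ σ k' i) :
    opNorm (∑ i, D i) ≤ ∑ k, ⨆ i, opNorm ((hD i).sqrt * (hD (σ k i)).sqrt) := by
  set e := Matrix.toEuclideanCLM (𝕜 := ℂ) (n := Fin d)
  have hbij : ∀ i, (fun k => σ k i).Bijective := fun i =>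
    Finite.injective_iff_bijective.mp fun k k' h => by_contra fun hne => horth k k' hne i h
  have hsqrt_mul : ∀ i, e (hD i).sqrt * e (hD i).sqrt = e (D i) := fun i => by
    rw [← map_mul, (hD i).sqrt_mul_sqrt]
  have := ContinuousLinearMap.norm_sum_mul_self_le_sum_iSup (fun i => e (hD i).sqrt)
    (fun i => (hD i).isSelfAdjoint_sqrt.map e) σ hbij
  simpa only [opNorm, map_sum, map_mul, hsqrt_mul] using this

/-- Lemma 2 of Tomamichel–Fehr–Kaniewski–Wehner: if `D 1, …, D N` are positive
semidefinite and `σ 1, …, σ N` are mutually orthogonal permutations of `{1,…,N}`,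
then `‖Σ_i D i‖ ≤ Σ_k max_i ‖√(D i) √(D (σ k i))‖`. -/
theorem stmt3 {d N : ℕ} (hN : 0 < N)
    (D : Fin N → Matrix (Fin d) (Fin d) ℂ)
    (hD : ∀ i, (D i).PosSemidef)
    (σ : Fin N → Equiv.Perm (Fin N))
    (horth : ∀ k k', k ≠ k' → ∀ i, σ k i ≠ σ k' i) :
    opNorm (∑ i, D i) ≤ ∑ k, ⨆ i, opNorm ((hD i).sqrt * (hD (σ k i)).sqrt) :=
  stmt3_general D hD σ horth
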